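/- arXiv:2408.13910 — 5 statements merged into one kernel-verified Lean document; each statement's English description precedes it below -/
import Mathlib

section
/- If Γ is a group admitting a finite filtration 1 = Γ₀ ⊆ Γ₁ ⊆ ⋯ ⊆ Γ_s = Γ by finitely generated subgroups with Γ_{i-1} normal in Γ_i and each quotient Γ_i/Γ_{i-1} a free group, then every finite-index subgroup Γ' ⊆ Γ admits such a filtration as well. -/
/-- A group `Γ` is a successive extension of finitely generated free groups if it has a
finite filtration `⊥ = Γ₀ ⊆ Γ₁ ⊆ ⋯ ⊆ Γ_s = Γ` by finitely generated subgroups such that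
each `Γ_{i-1}` is normal in `Γ_i` with free quotient `Γ_i/Γ_{i-1}`. -/
def IsSuccExtOfFGFree (Γ : Type*) [Group Γ] : Prop :=
  ∃ (s : ℕ) (c : Fin (s + 1) → Subgroup Γ),
    c 0 = ⊥ ∧ c (Fin.last s) = ⊤ ∧ (∀ i, (c i).FG) ∧
    ∀ i : Fin s,
      c i.castSucc ≤ c i.succ ∧
      ∃ _ : ((c i.castSucc).subgroupOf (c i.succ)).Normal,
        IsFreeGroup ((c i.succ) ⧸ (c i.castSucc).subgroupOf (c i.succ))

/-- The natural map from `B.subgroupOf Γ'` to `B`. -/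
def subgroupOfHom {Γ : Type*} [Group Γ] (B Γ' : Subgroup Γ) :
    (B.subgroupOf Γ') →* B where
  toFun x := ⟨x.1.1, x.2⟩
  map_one' := rfl
  map_mul' _ _ := rfl

/-- Every finite-index subgroup of a successive extension of finitely generated free
groups is again a successive extension of finitely generated free groups. -/
theorem isSuccExtOfFGFree_of_finiteIndex {Γ : Type*} [Group Γ]
    (hΓ : IsSuccExtOfFGFree Γ) (Γ' : Subgroup Γ) (hΓ' : Γ'.FiniteIndex) :
    IsSuccExtOfFGFree Γ' := by
  obtain ⟨s, c, hc0, hclast, hcfg, hstep⟩ := hΓ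
  refine ⟨s, fun i => (c i).subgroupOf Γ', by show (c 0).subgroupOf Γ' = ⊥; rw [hc0]; exact Subgroup.bot_subgroupOf (H := Γ'),
    by show (c (Fin.last s)).subgroupOf Γ' = ⊤; rw [hclast]; exact Subgroup.top_subgroupOf Γ', ?_, ?_⟩
  · -- finite generation
    intro i
    rw [← Group.fg_iff_subgroup_fg]
    haveI : Group.FG (c i) := (Group.fg_iff_subgroup_fg _).mpr (hcfg i)
    haveI : Group.FG (Γ'.subgroupOf (c i)) := Subgroup.fg_of_index_ne_zero _
    have e : (Γ'.subgroupOf (c i)) ≃* ((c i).subgroupOf Γ') := by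
      refine (((MulEquiv.subgroupCongr
        (Subgroup.inf_subgroupOf_right Γ' (c i)).symm).trans
        (Subgroup.subgroupOfEquivOfLe inf_le_right)).trans
        (MulEquiv.subgroupCongr (inf_comm Γ' (c i)))).trans ?_
      exact ((MulEquiv.subgroupCongr
        (Subgroup.inf_subgroupOf_right (c i) Γ').symm).trans
        (Subgroup.subgroupOfEquivOfLe inf_le_right)).symm
    exact Group.fg_of_surjective (f := e.toMonoidHom) e.surjective
  · intro i
    obtain ⟨hle, hN, hfree⟩ := hstep i
    haveI := hN
    haveI := hfree
    set A := c i.castSucc with hA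
    set B := c i.succ with hB
    refine ⟨fun x hx => hle hx, ?_⟩
    -- the composition of the inclusion with the quotient map
    set φ : (B.subgroupOf Γ') →* B ⧸ A.subgroupOf B :=
      (QuotientGroup.mk' (A.subgroupOf B)).comp (subgroupOfHom B Γ') with hφ
    have hker : φ.ker = (A.subgroupOf Γ').subgroupOf (B.subgroupOf Γ') := by
      ext x
      simp only [hφ, MonoidHom.mem_ker, MonoidHom.comp_apply, QuotientGroup.mk'_apply,
        QuotientGroup.eq_one_iff, Subgroup.mem_subgroupOf, subgroupOfHom]
      rfl
    haveI hN' : ((A.subgroupOf Γ').subgroupOf (B.subgroupOf Γ')).Normal :=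
      hker ▸ φ.normal_ker
    refine ⟨hN', ?_⟩
    have e : ((B.subgroupOf Γ') ⧸ (A.subgroupOf Γ').subgroupOf (B.subgroupOf Γ')) ≃*
        φ.range :=
      (QuotientGroup.quotientMulEquivOfEq hker.symm).trans
        (QuotientGroup.quotientKerEquivRange φ)
    exact IsFreeGroup.ofMulEquiv e.symm
end

section
/- Let K be an algebraically closed field of characteristic zero and ρ: G → GL(V) a finite-dimensional representation such that for every finite-index subgroup G' ⊆ G the restriction ρ|_{G'} is semisimple with all simple constituents having finite-order determinant. Then the identity component of the Zariski closure of ρ(G) in GL(V) is a semisimple algebraic group. -/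
section Preamble

variable (K : Type*) [Field K] (V : Type*) [AddCommGroup V] [Module K V]

/-- The algebra of polynomial functions on `End(V) × End(V)` (recording an endomorphism
together with its inverse), i.e. the subalgebra of functions generated by linear
functionals.  Zero loci of such functions are the Zariski-closed subsets of `GL(V)`. -/
def endPairPolynomials : Subalgebra K (((V →ₗ[K] V) × (V →ₗ[K] V)) → K) :=
  Algebra.adjoin K (Set.range fun φ : ((V →ₗ[K] V) × (V →ₗ[K] V)) →ₗ[K] K => (φ : _ → K))

variable {K V}

/-- A subset of `GL(V)` is Zariski closed if it is the zero locus of a set of polynomial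
functions in the matrix entries of `g` and `g⁻¹`. -/
def IsZarClosed (C : Set (V ≃ₗ[K] V)) : Prop :=
  ∃ T : Set (((V →ₗ[K] V) × (V →ₗ[K] V)) → K),
    (∀ f ∈ T, f ∈ endPairPolynomials K V) ∧
    C = {g : V ≃ₗ[K] V | ∀ f ∈ T,
      f ((g : V →ₗ[K] V), ((g⁻¹ : V ≃ₗ[K] V) : V →ₗ[K] V)) = 0}

/-- The Zariski closure of a subset of `GL(V)` as an algebraic subgroup: the smallest
Zariski-closed subgroup containing it. -/
def zarSubgroupClosure (S : Set (V ≃ₗ[K] V)) : Subgroup (V ≃ₗ[K] V) :=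
  ⨅ H ∈ {H : Subgroup (V ≃ₗ[K] V) | S ⊆ (H : Set (V ≃ₗ[K] V)) ∧
    IsZarClosed (H : Set (V ≃ₗ[K] V))}, H

/-- The Zariski closure `Mo(ρ)` of the image of a representation `ρ : G → GL(V)`. -/
def monodromyGroup {G : Type*} [Group G] (ρ : G →* (V ≃ₗ[K] V)) :
    Subgroup (V ≃ₗ[K] V) :=
  zarSubgroupClosure (Set.range ρ)

/-- The identity component of an algebraic subgroup of `GL(V)`: the smallest
Zariski-closed finite-index subgroup. -/
def identityComponent (M : Subgroup (V ≃ₗ[K] V)) : Subgroup (V ≃ₗ[K] V) :=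
  ⨅ H ∈ {H : Subgroup (V ≃ₗ[K] V) | H ≤ M ∧ IsZarClosed (H : Set (V ≃ₗ[K] V)) ∧
    (H.subgroupOf M).FiniteIndex}, H

/-- A connected algebraic subgroup of `GL(V)`. -/
def IsConnectedAlgGroup (M : Subgroup (V ≃ₗ[K] V)) : Prop :=
  IsZarClosed (M : Set (V ≃ₗ[K] V)) ∧ identityComponent M = M

/-- A (connected) semisimple algebraic subgroup of `GL(V)`: a connected Zariski-closed
subgroup with no nontrivial Zariski-closed connected normal abelian subgroup. -/
def IsSemisimpleAlgGroup (M : Subgroup (V ≃ₗ[K] V)) : Prop :=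
  IsConnectedAlgGroup M ∧
  ∀ W : Subgroup (V ≃ₗ[K] V), W ≤ M → IsZarClosed (W : Set (V ≃ₗ[K] V)) →
    identityComponent W = W →
    (∀ g ∈ M, ∀ w ∈ W, g * w * g⁻¹ ∈ W) →
    (∀ a ∈ W, ∀ b ∈ W, a * b = b * a) → W = ⊥

variable {G : Type*} [Group G]

/-- A submodule invariant under the action of a subgroup `G' ⊆ G` via `ρ`. -/
def IsInvariantOn (ρ : G →* (V ≃ₗ[K] V)) (G' : Subgroup G) (p : Submodule K V) : Prop :=
  ∀ g ∈ G', ∀ v ∈ p, ρ g v ∈ p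

/-- The restriction `ρ|_{G'}` is semisimple: every invariant submodule has an invariant
complement. -/
def IsSemisimpleOn (ρ : G →* (V ≃ₗ[K] V)) (G' : Subgroup G) : Prop :=
  ∀ p : Submodule K V, IsInvariantOn ρ G' p →
    ∃ q : Submodule K V, IsInvariantOn ρ G' q ∧ IsCompl p q

/-- `p` is a simple constituent for the action of `G'` via `ρ`. -/
def IsSimpleOn (ρ : G →* (V ≃ₗ[K] V)) (G' : Subgroup G) (p : Submodule K V) : Prop :=
  IsInvariantOn ρ G' p ∧ p ≠ ⊥ ∧
  ∀ q ≤ p, IsInvariantOn ρ G' q → q = ⊥ ∨ q = p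

/-- The determinant character of the action of `G'` on the invariant submodule `p`
has finite order. -/
def HasFiniteDetOn (ρ : G →* (V ≃ₗ[K] V)) (G' : Subgroup G) (p : Submodule K V) : Prop :=
  ∃ m : ℕ, 0 < m ∧ ∀ g ∈ G', ∀ h : ∀ v ∈ p, ρ g v ∈ p,
    (LinearMap.det ((ρ g : V →ₗ[K] V).restrict h)) ^ m = 1

/-- The restriction `ρ|_{G'}` is admissible: it is semisimple and all its simple
constituents have finite-order determinant. -/
def IsAdmissibleOn (ρ : G →* (V ≃ₗ[K] V)) (G' : Subgroup G) : Prop :=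
  IsSemisimpleOn ρ G' ∧ ∀ p : Submodule K V, IsSimpleOn ρ G' p → HasFiniteDetOn ρ G' p

end Preamble

/-!
Let `M°` be the identity component of the monodromy group `M` and `G' = ρ⁻¹(M°)`, a subgroup of
finite index. The Zariski closure of the image of a finite-index normal subgroup has finite index
in `M`, so `M°` is the Zariski closure of `ρ(G')`: every `G'`-invariant subspace is `M°`-stable,
and every closed condition satisfied by `ρ(G')`, such as having determinant of order dividing `m`
on an invariant subspace, holds on all of `M°`.

Let `W ⊆ M°` be a closed connected normal abelian subgroup. The sum of the weight spaces of `W`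
is `M°`-stable, so it has a `G'`-invariant complement; a nonzero complement would contain a common
eigenvector of `W`, hence `W` is diagonalisable. The connected group `M°` permutes the finitely
many weight spaces, hence stabilises each of them. A simple `G'`-constituent inside the weight
space of `χ` has determinant of finite order, so `χ` takes values in the `r`-th roots of unity for
some `r > 0`; its kernel is then a closed subgroup of finite index of the connected group `W`, so
`χ` is trivial. Thus `W` acts trivially on `V`.
-/

open Pointwise

section GLZariski

variable {K : Type*} [Field K] {V : Type*} [AddCommGroup V] [Module K V]

def toEndPair (g : V ≃ₗ[K] V) : (V →ₗ[K] V) × (V →ₗ[K] V) :=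
  ((g : V →ₗ[K] V), ((g⁻¹ : V ≃ₗ[K] V) : V →ₗ[K] V))

theorem linearMap_mem_endPairPolynomials (φ : ((V →ₗ[K] V) × (V →ₗ[K] V)) →ₗ[K] K) :
    ⇑φ ∈ endPairPolynomials K V :=
  Algebra.subset_adjoin ⟨φ, rfl⟩

theorem const_mem_endPairPolynomials (c : K) :
    (fun _ => c) ∈ endPairPolynomials K V :=
  (endPairPolynomials K V).algebraMap_mem c

theorem comp_linearMap_mem_endPairPolynomials {f : ((V →ₗ[K] V) × (V →ₗ[K] V)) → K}
    (hf : f ∈ endPairPolynomials K V)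
    (L : ((V →ₗ[K] V) × (V →ₗ[K] V)) →ₗ[K] ((V →ₗ[K] V) × (V →ₗ[K] V))) :
    f ∘ L ∈ endPairPolynomials K V := by
  induction hf using Algebra.adjoin_induction with
  | mem f hf =>
    obtain ⟨φ, rfl⟩ := hf
    exact linearMap_mem_endPairPolynomials (φ ∘ₗ L)
  | algebraMap c => exact const_mem_endPairPolynomials c
  | add f f' _ _ hf hf' => exact add_mem hf hf'
  | mul f f' _ _ hf hf' => exact mul_mem hf hf'

theorem isZarClosed_setOf_eq_zero {f : ((V →ₗ[K] V) × (V →ₗ[K] V)) → K}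
    (hf : f ∈ endPairPolynomials K V) : IsZarClosed {g : V ≃ₗ[K] V | f (toEndPair g) = 0} :=
  ⟨{f}, by simpa using hf, by simp [toEndPair]⟩

theorem IsZarClosed.iInter {ι : Sort*} {C : ι → Set (V ≃ₗ[K] V)} (hC : ∀ i, IsZarClosed (C i)) :
    IsZarClosed (⋂ i, C i) := by
  choose T hT hCT using hC
  refine ⟨⋃ i, T i, fun f hf => ?_, ?_⟩
  · obtain ⟨i, hi⟩ := Set.mem_iUnion.mp hf
    exact hT i f hi
  · ext g
    simp only [hCT, Set.mem_iInter, Set.mem_iUnion, Set.mem_ofPred_eq]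
    exact ⟨fun h f ⟨i, hi⟩ => h i f hi, fun h i f hi => h f ⟨i, hi⟩⟩

theorem IsZarClosed.inter {C D : Set (V ≃ₗ[K] V)} (hC : IsZarClosed C) (hD : IsZarClosed D) :
    IsZarClosed (C ∩ D) := by
  rw [Set.inter_eq_iInter]
  exact .iInter (Bool.forall_bool.mpr ⟨hD, hC⟩)

theorem IsZarClosed.iUnion {ι : Type*} [Finite ι] {C : ι → Set (V ≃ₗ[K] V)}
    (hC : ∀ i, IsZarClosed (C i)) : IsZarClosed (⋃ i, C i) := by
  have := Fintype.ofFinite ι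
  choose T hT hCT using hC
  refine ⟨Set.range fun c : (i : ι) → T i => ∏ i, (c i : _ → K), ?_, ?_⟩
  · rintro _ ⟨c, rfl⟩
    exact prod_mem fun i _ => hT i _ (c i).2
  · ext g
    simp only [hCT, Set.mem_iUnion, Set.mem_ofPred_eq, Set.forall_mem_range, Finset.prod_apply]
    refine ⟨fun ⟨i, hi⟩ c => Finset.prod_eq_zero (Finset.mem_univ i) (hi _ (c i).2), ?_⟩
    contrapose!
    intro h
    choose c hcT hc using h
    exact ⟨fun i => ⟨c i, hcT i⟩, Finset.prod_ne_zero_iff.mpr fun i _ => hc i⟩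

theorem IsZarClosed.preimage {C : Set (V ≃ₗ[K] V)} (hC : IsZarClosed C)
    {φ : (V ≃ₗ[K] V) → V ≃ₗ[K] V}
    (L : ((V →ₗ[K] V) × (V →ₗ[K] V)) →ₗ[K] ((V →ₗ[K] V) × (V →ₗ[K] V)))
    (hL : ∀ g, toEndPair (φ g) = L (toEndPair g)) : IsZarClosed (φ ⁻¹' C) := by
  obtain ⟨T, hT, rfl⟩ := hC
  refine ⟨(· ∘ L) '' T, ?_, ?_⟩
  · rintro _ ⟨f, hf, rfl⟩
    exact comp_linearMap_mem_endPairPolynomials (hT f hf) L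
  · ext g
    simp only [Set.mem_preimage, Set.mem_ofPred_eq, Set.forall_mem_image, Function.comp_apply]
    exact forall₂_congr fun f _ => by rw [← toEndPair, hL]; rfl

theorem IsZarClosed.preimage_mul_mul {C : Set (V ≃ₗ[K] V)} (hC : IsZarClosed C)
    (a b : V ≃ₗ[K] V) : IsZarClosed ((fun g => a * g * b) ⁻¹' C) :=
  hC.preimage (((LinearMap.mulLeft K (a : V →ₗ[K] V)).comp
      (LinearMap.mulRight K (b : V →ₗ[K] V))).prodMap
    ((LinearMap.mulLeft K ((b⁻¹ : V ≃ₗ[K] V) : V →ₗ[K] V)).comp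
      (LinearMap.mulRight K ((a⁻¹ : V ≃ₗ[K] V) : V →ₗ[K] V)))) fun g => by
    simp only [toEndPair, mul_inv_rev, LinearMap.prodMap_apply, LinearMap.comp_apply,
      LinearMap.mulLeft_apply, LinearMap.mulRight_apply, mul_assoc]
    rfl

theorem isZarClosed_setOf_sub_mem (ψ : ((V →ₗ[K] V) × (V →ₗ[K] V)) →ₗ[K] V) (v₀ : V)
    (p : Submodule K V) : IsZarClosed {g : V ≃ₗ[K] V | ψ (toEndPair g) - v₀ ∈ p} := by
  have hC := IsZarClosed.iInter fun φ : p.dualAnnihilator =>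
    isZarClosed_setOf_eq_zero
      (sub_mem (linearMap_mem_endPairPolynomials ((φ : Module.Dual K V) ∘ₗ ψ))
        (const_mem_endPairPolynomials ((φ : Module.Dual K V) v₀)))
  convert hC using 1
  ext g
  simp only [Set.mem_ofPred_eq, Set.mem_iInter, Pi.sub_apply, LinearMap.coe_comp,
    Function.comp_apply]
  rw [← Subspace.forall_mem_dualAnnihilator_apply_eq_zero_iff]
  simp [sub_eq_zero]

theorem endPairPolynomials_fg [FiniteDimensional K V] : (endPairPolynomials K V).FG := by
  classical
  set b := Module.finBasis K (Module.Dual K ((V →ₗ[K] V) × (V →ₗ[K] V)))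
  set L := LinearMap.ltoFun K ((V →ₗ[K] V) × (V →ₗ[K] V)) K K
  refine ⟨Finset.univ.image fun i => ⇑(b i), ?_⟩
  have hL : Set.range (fun φ : ((V →ₗ[K] V) × (V →ₗ[K] V)) →ₗ[K] K => (φ : _ → K))
      = Submodule.span K (Set.range fun i => ⇑(b i)) := by
    change Set.range L = _
    rw [← LinearMap.coe_range L, LinearMap.range_eq_map, ← b.span_eq, Submodule.map_span,
      ← Set.range_comp]
    rfl
  rw [endPairPolynomials, hL, Algebra.adjoin_span]
  simp

def vanishingIdeal (C : Set (V ≃ₗ[K] V)) : Ideal (endPairPolynomials K V) where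
  carrier := {f | ∀ g ∈ C, (f : _ → K) (toEndPair g) = 0}
  zero_mem' _ _ := rfl
  add_mem' hf hf' g hg := by simp [hf g hg, hf' g hg]
  smul_mem' c f hf g hg := by simp [hf g hg]

theorem IsZarClosed.eq_zeroLocus_vanishingIdeal {C : Set (V ≃ₗ[K] V)} (hC : IsZarClosed C) :
    C = {g | ∀ f ∈ vanishingIdeal C, (f : _ → K) (toEndPair g) = 0} := by
  refine subset_antisymm (fun g hg f hf => hf g hg) fun g hg => ?_
  obtain ⟨T, hT, hCT⟩ := hC
  rw [hCT]
  exact fun f hf => hg ⟨f, hT f hf⟩ fun g' hg' => (hCT ▸ hg') f hf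

theorem IsZarClosed.exists_minimal [FiniteDimensional K V] {F : Set (Set (V ≃ₗ[K] V))}
    (hF : ∀ C ∈ F, IsZarClosed C) (hne : F.Nonempty) :
    ∃ C₀ ∈ F, ∀ C ∈ F, C ⊆ C₀ → C = C₀ := by
  have := (Subalgebra.fg_iff_finiteType _).mp (endPairPolynomials_fg (K := K) (V := V))
  have := Algebra.FiniteType.isNoetherianRing K (endPairPolynomials K V)
  obtain ⟨_, ⟨C₀, hC₀, rfl⟩, hmax⟩ :=
    set_has_maximal_iff_noetherian.mpr (isNoetherianRing_iff.mp this) _ (hne.image vanishingIdeal)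
  refine ⟨C₀, hC₀, fun C hC hCC₀ => ?_⟩
  have hle : vanishingIdeal C₀ ≤ vanishingIdeal C := fun f hf g hg => hf g (hCC₀ hg)
  have heq : vanishingIdeal C = vanishingIdeal C₀ :=
    (eq_of_le_of_not_lt hle (hmax _ ⟨C, hC, rfl⟩)).symm
  rw [(hF C hC).eq_zeroLocus_vanishingIdeal, (hF C₀ hC₀).eq_zeroLocus_vanishingIdeal, heq]

theorem isZarClosed_fixingSubgroup (s : Set V) :
    IsZarClosed (fixingSubgroup (V ≃ₗ[K] V) s : Set (V ≃ₗ[K] V)) := by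
  have hC := IsZarClosed.iInter fun v : s =>
    isZarClosed_setOf_sub_mem ((LinearMap.applyₗ (v : V)).comp (LinearMap.fst K _ _)) v ⊥
  convert hC using 1
  ext g
  simp [mem_fixingSubgroup_iff, toEndPair, sub_eq_zero]

theorem mem_stabilizer_submodule_iff {p : Submodule K V} {g : V ≃ₗ[K] V} :
    g ∈ MulAction.stabilizer (V ≃ₗ[K] V) p ↔ (∀ v ∈ p, g v ∈ p) ∧ ∀ v ∈ p, g⁻¹ v ∈ p := by
  refine ⟨fun hg => ⟨fun v hv => ?_, fun v hv => ?_⟩, fun ⟨hg, hg'⟩ => ?_⟩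
  · rw [← MulAction.mem_stabilizer_iff.mp hg]
    exact ⟨v, hv, rfl⟩
  · rw [← MulAction.mem_stabilizer_iff.mp (inv_mem hg)]
    exact ⟨v, hv, rfl⟩
  · refine MulAction.mem_stabilizer_iff.mpr (le_antisymm ?_ fun v hv => ⟨g⁻¹ v, hg' v hv, ?_⟩)
    · rintro _ ⟨v, hv, rfl⟩
      exact hg v hv
    · exact g.apply_symm_apply v

theorem isZarClosed_stabilizer (p : Submodule K V) :
    IsZarClosed (MulAction.stabilizer (V ≃ₗ[K] V) p : Set (V ≃ₗ[K] V)) := by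
  have hC := (IsZarClosed.iInter fun v : p =>
    isZarClosed_setOf_sub_mem ((LinearMap.applyₗ (v : V)).comp (LinearMap.fst K _ _)) 0 p).inter
    (IsZarClosed.iInter fun v : p =>
    isZarClosed_setOf_sub_mem ((LinearMap.applyₗ (v : V)).comp (LinearMap.snd K _ _)) 0 p)
  convert hC using 1
  ext g
  rw [SetLike.mem_coe, mem_stabilizer_submodule_iff]
  simp [toEndPair]

/-- A polynomial function of `f` that agrees with `det (f|_p)` whenever `f` maps `p` into
itself. -/
noncomputable def compressedDet (p : Submodule K V) (f : V →ₗ[K] V) : K :=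
  LinearMap.det (p.projectionOnto _ p.exists_isCompl.choose_spec ∘ₗ f ∘ₗ p.subtype)

theorem compressedDet_eq_det_restrict {p : Submodule K V} {f : V →ₗ[K] V}
    (hf : ∀ v ∈ p, f v ∈ p) : compressedDet p f = LinearMap.det (f.restrict hf) := by
  have h : p.projectionOnto _ p.exists_isCompl.choose_spec ∘ₗ f ∘ₗ p.subtype = f.restrict hf := by
    ext v
    simp [Submodule.projectionOnto_apply_left _ ⟨f v, hf v v.2⟩]
  rw [compressedDet, h]

theorem compressedDet_mem_endPairPolynomials [FiniteDimensional K V] (p : Submodule K V) :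
    (fun x => compressedDet p x.1) ∈ endPairPolynomials K V := by
  classical
  set b := Module.finBasis K p
  set π := p.projectionOnto _ p.exists_isCompl.choose_spec
  have key : (fun x => compressedDet p x.1) = ∑ σ : Equiv.Perm (Fin (Module.finrank K p)),
      (fun _ => ((Equiv.Perm.sign σ : ℤ) : K)) * ∏ i, ⇑((b.coord (σ i)) ∘ₗ π ∘ₗ
        (LinearMap.applyₗ (M₂ := V) (b i : V)).comp
          (LinearMap.fst K (V →ₗ[K] V) (V →ₗ[K] V))) := by
    funext x
    rw [compressedDet, ← LinearMap.det_toMatrix b, Matrix.det_apply, Finset.sum_apply]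
    refine Finset.sum_congr rfl fun σ _ => ?_
    rw [Pi.mul_apply, Finset.prod_apply, Units.smul_def, zsmul_eq_mul]
    congr 1
    exact Finset.prod_congr rfl fun i _ => by simp [LinearMap.toMatrix_apply]; rfl
  rw [key]
  exact sum_mem fun σ _ => mul_mem (const_mem_endPairPolynomials _)
    (prod_mem fun i _ => linearMap_mem_endPairPolynomials _)

theorem compressedDet_mul {p : Submodule K V} {f g : V →ₗ[K] V} (hf : ∀ v ∈ p, f v ∈ p)
    (hg : ∀ v ∈ p, g v ∈ p) : compressedDet p (f * g) = compressedDet p f * compressedDet p g := by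
  rw [compressedDet_eq_det_restrict hf, compressedDet_eq_det_restrict hg,
    compressedDet_eq_det_restrict (f := f * g) fun (v : V) hv => hf (g v) (hg v hv),
    ← LinearMap.det_comp]
  rfl

theorem compressedDet_one (p : Submodule K V) : compressedDet p 1 = 1 := by
  rw [compressedDet_eq_det_restrict (f := 1) fun (v : V) hv => hv]
  exact LinearMap.det_id

noncomputable def detRootSubgroup (p : Submodule K V) (m : ℕ) : Subgroup (V ≃ₗ[K] V) where
  carrier := {g | g ∈ MulAction.stabilizer (V ≃ₗ[K] V) p ∧ compressedDet p g ^ m = 1}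
  one_mem' := ⟨one_mem _, by
    rw [LinearEquiv.coe_toLinearMap_one, ← Module.End.one_eq_id, compressedDet_one, one_pow]⟩
  mul_mem' := by
    rintro g h ⟨hg, hgm⟩ ⟨hh, hhm⟩
    refine ⟨mul_mem hg hh, ?_⟩
    rw [LinearEquiv.coe_toLinearMap_mul, compressedDet_mul (mem_stabilizer_submodule_iff.mp hg).1
      (mem_stabilizer_submodule_iff.mp hh).1, mul_pow, hgm, hhm, one_mul]
  inv_mem' := by
    rintro g ⟨hg, hgm⟩
    refine ⟨inv_mem hg, ?_⟩
    have h := compressedDet_mul (mem_stabilizer_submodule_iff.mp (inv_mem hg)).1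
      (mem_stabilizer_submodule_iff.mp hg).1
    rw [← LinearEquiv.coe_toLinearMap_mul, inv_mul_cancel, LinearEquiv.coe_toLinearMap_one,
      ← Module.End.one_eq_id, compressedDet_one] at h
    rw [← one_pow m, h, mul_pow, hgm, mul_one]

theorem isZarClosed_detRootSubgroup [FiniteDimensional K V] (p : Submodule K V) (m : ℕ) :
    IsZarClosed (detRootSubgroup p m : Set (V ≃ₗ[K] V)) := by
  convert (isZarClosed_stabilizer p).inter (isZarClosed_setOf_eq_zero (sub_mem
    (pow_mem (compressedDet_mem_endPairPolynomials p) m) (const_mem_endPairPolynomials 1))) using 1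
  ext g
  simp [detRootSubgroup, toEndPair, sub_eq_zero]

theorem compressedDet_eq_pow_of_apply_eq_smul {p : Submodule K V} {f : V →ₗ[K] V} {c : K}
    (hf : ∀ v ∈ p, f v = c • v) : compressedDet p f = c ^ Module.finrank K p := by
  have hfp : ∀ v ∈ p, f v ∈ p := fun v hv => hf v hv ▸ p.smul_mem c hv
  have hres : f.restrict hfp = c • LinearMap.id := by
    ext v
    simp [hf v v.2]
  rw [compressedDet_eq_det_restrict hfp, hres, LinearMap.det_smul, LinearMap.det_id, mul_one]

theorem isZarClosed_zarSubgroupClosure (S : Set (V ≃ₗ[K] V)) :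
    IsZarClosed (zarSubgroupClosure S : Set (V ≃ₗ[K] V)) := by
  simp only [zarSubgroupClosure, Subgroup.coe_iInf]
  exact .iInter fun H => .iInter fun hH => hH.2

theorem subset_zarSubgroupClosure (S : Set (V ≃ₗ[K] V)) : S ⊆ zarSubgroupClosure S := by
  intro g hg
  simp only [zarSubgroupClosure, SetLike.mem_coe, Subgroup.mem_iInf]
  exact fun H hH => hH.1 hg

theorem zarSubgroupClosure_le {S : Set (V ≃ₗ[K] V)} {H : Subgroup (V ≃ₗ[K] V)}
    (hSH : S ⊆ H) (hH : IsZarClosed (H : Set (V ≃ₗ[K] V))) : zarSubgroupClosure S ≤ H :=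
  iInf₂_le H ⟨hSH, hH⟩

theorem isZarClosed_identityComponent (M : Subgroup (V ≃ₗ[K] V)) :
    IsZarClosed (identityComponent M : Set (V ≃ₗ[K] V)) := by
  simp only [identityComponent, Subgroup.coe_iInf]
  exact .iInter fun H => .iInter fun hH => hH.2.1

theorem identityComponent_le {M H : Subgroup (V ≃ₗ[K] V)} (hHM : H ≤ M)
    (hH : IsZarClosed (H : Set (V ≃ₗ[K] V))) (hHfin : (H.subgroupOf M).FiniteIndex) :
    identityComponent M ≤ H :=
  iInf₂_le H ⟨hHM, hH, hHfin⟩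

theorem exists_eq_identityComponent [FiniteDimensional K V] {M : Subgroup (V ≃ₗ[K] V)}
    (hM : IsZarClosed (M : Set (V ≃ₗ[K] V))) :
    ∃ H : Subgroup (V ≃ₗ[K] V), H ≤ M ∧ IsZarClosed (H : Set (V ≃ₗ[K] V)) ∧
      (H.subgroupOf M).FiniteIndex ∧ identityComponent M = H := by
  set F := {H : Subgroup (V ≃ₗ[K] V) | H ≤ M ∧ IsZarClosed (H : Set (V ≃ₗ[K] V)) ∧
    (H.subgroupOf M).FiniteIndex}
  have hMF : M ∈ F := ⟨le_rfl, hM, by rw [Subgroup.subgroupOf_self]; infer_instance⟩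
  -- `F` is closed under `⊓`, so a member that is minimal (which exists by Noetherianity) is least.
  obtain ⟨_, ⟨H₀, hH₀, rfl⟩, hmin⟩ := IsZarClosed.exists_minimal (F := SetLike.coe '' F)
    (by rintro _ ⟨H, hH, rfl⟩; exact hH.2.1) ⟨M, M, hMF, rfl⟩
  refine ⟨H₀, hH₀.1, hH₀.2.1, hH₀.2.2, le_antisymm (iInf₂_le H₀ hH₀) (le_iInf₂ fun H hH => ?_)⟩
  have hinf : H ⊓ H₀ ∈ F := by
    refine ⟨inf_le_of_left_le hH.1, hH.2.1.inter hH₀.2.1, ?_⟩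
    have := hH.2.2
    have := hH₀.2.2
    rw [show (H ⊓ H₀).subgroupOf M = H.subgroupOf M ⊓ H₀.subgroupOf M from rfl]
    infer_instance
  have := hmin _ ⟨_, hinf, rfl⟩ (by simp)
  rw [← SetLike.coe_set_eq.mp this]
  exact inf_le_left

theorem identityComponent_le_self [FiniteDimensional K V] {M : Subgroup (V ≃ₗ[K] V)}
    (hM : IsZarClosed (M : Set (V ≃ₗ[K] V))) : identityComponent M ≤ M := by
  obtain ⟨H, hHM, -, -, hH⟩ := exists_eq_identityComponent hM
  exact hH ▸ hHM

theorem finiteIndex_identityComponent [FiniteDimensional K V] {M : Subgroup (V ≃ₗ[K] V)}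
    (hM : IsZarClosed (M : Set (V ≃ₗ[K] V))) :
    ((identityComponent M).subgroupOf M).FiniteIndex := by
  obtain ⟨H, -, -, hH, hMH⟩ := exists_eq_identityComponent hM
  exact hMH ▸ hH

theorem isConnectedAlgGroup_identityComponent [FiniteDimensional K V] {M : Subgroup (V ≃ₗ[K] V)}
    (hM : IsZarClosed (M : Set (V ≃ₗ[K] V))) : IsConnectedAlgGroup (identityComponent M) := by
  refine ⟨isZarClosed_identityComponent M, le_antisymm (identityComponent_le_self
    (isZarClosed_identityComponent M)) (le_iInf₂ fun H ⟨hH, hHc, hHfin⟩ => ?_)⟩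
  refine identityComponent_le (hH.trans (identityComponent_le_self hM)) hHc ⟨?_⟩
  rw [← Subgroup.relIndex,
    ← Subgroup.relIndex_mul_relIndex H _ M hH (identityComponent_le_self hM)]
  exact mul_ne_zero hHfin.index_ne_zero (finiteIndex_identityComponent hM).index_ne_zero

theorem Subgroup.finiteIndex_of_eq_imp_inv_mul_mem {G X : Type*} [Group G] [Finite X]
    {H : Subgroup G} (f : G → X) (hf : ∀ a b, f a = f b → a⁻¹ * b ∈ H) : H.FiniteIndex := by
  have : Finite (G ⧸ H) := by
    refine Finite.of_surjective (fun x : Set.range f => ((Classical.choose x.2 : G) : G ⧸ H)) ?_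
    rintro ⟨g⟩
    have hg : ∃ a, f a = f g := ⟨g, rfl⟩
    exact ⟨⟨f g, hg⟩, QuotientGroup.eq.mpr (hf _ _ (Classical.choose_spec hg))⟩
  exact Subgroup.finiteIndex_of_finite_quotient

section Monodromy

variable {G : Type*} [Group G]

theorem isZarClosed_monodromyGroup (ρ : G →* (V ≃ₗ[K] V)) :
    IsZarClosed (monodromyGroup ρ : Set (V ≃ₗ[K] V)) :=
  isZarClosed_zarSubgroupClosure _

theorem apply_mem_monodromyGroup (ρ : G →* (V ≃ₗ[K] V)) (g : G) : ρ g ∈ monodromyGroup ρ :=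
  subset_zarSubgroupClosure _ ⟨g, rfl⟩

theorem monodromyGroup_le {ρ : G →* (V ≃ₗ[K] V)} {H : Subgroup (V ≃ₗ[K] V)}
    (hH : IsZarClosed (H : Set (V ≃ₗ[K] V))) (hρH : ∀ g, ρ g ∈ H) : monodromyGroup ρ ≤ H :=
  zarSubgroupClosure_le (Set.range_subset_iff.mpr hρH) hH

theorem conj_mem_monodromyGroup_comp_subtype (ρ : G →* (V ≃ₗ[K] V)) (N : Subgroup G) [N.Normal]
    (g : G) {x : V ≃ₗ[K] V} (hx : x ∈ monodromyGroup (ρ.comp N.subtype)) :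
    ρ g * x * (ρ g)⁻¹ ∈ monodromyGroup (ρ.comp N.subtype) := by
  have hle : monodromyGroup (ρ.comp N.subtype) ≤
      (monodromyGroup (ρ.comp N.subtype)).comap (MulAut.conj (ρ g)).toMonoidHom := by
    refine monodromyGroup_le ((isZarClosed_monodromyGroup _).preimage_mul_mul _ _) fun n => ?_
    have := apply_mem_monodromyGroup (ρ.comp N.subtype) ⟨g * n * g⁻¹, Subgroup.Normal.conj_mem
      inferInstance _ n.2 g⟩
    simpa using this
  simpa using hle hx

theorem exists_inv_mul_mem_monodromyGroup_comp_subtype (ρ : G →* (V ≃ₗ[K] V))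
    (N : Subgroup G) [N.Normal] [N.FiniteIndex] {x : V ≃ₗ[K] V} (hx : x ∈ monodromyGroup ρ) :
    ∃ q : G ⧸ N, (ρ q.out)⁻¹ * x ∈ monodromyGroup (ρ.comp N.subtype) := by
  set Mₙ := monodromyGroup (ρ.comp N.subtype)
  -- `ρ(G)` normalizes `Mₙ`, so `ρ(G) ⊔ Mₙ = ρ(G) Mₙ` is a union of finitely many translates of
  -- `Mₙ`: it is closed, hence contains `monodromyGroup ρ`.
  have hnorm : ρ.range ≤ Subgroup.normalizer (Mₙ : Set (V ≃ₗ[K] V)) := by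
    rintro _ ⟨g, rfl⟩
    refine Subgroup.mem_normalizer_iff.mpr fun x =>
      ⟨conj_mem_monodromyGroup_comp_subtype ρ N g, fun hx => ?_⟩
    simpa [mul_assoc] using conj_mem_monodromyGroup_comp_subtype ρ N g⁻¹ hx
  have hcover : ((ρ.range ⊔ Mₙ : Subgroup (V ≃ₗ[K] V)) : Set (V ≃ₗ[K] V)) =
      ⋃ q : G ⧸ N, (fun x => (ρ q.out)⁻¹ * x) ⁻¹' Mₙ := by
    rw [Subgroup.coe_mul_of_left_le_normalizer_right _ _ hnorm]
    ext x
    simp only [Set.mem_mul, SetLike.mem_coe, MonoidHom.mem_range, Set.mem_iUnion,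
      Set.mem_preimage]
    constructor
    · rintro ⟨_, ⟨g, rfl⟩, m, hm, rfl⟩
      obtain ⟨n, hn⟩ := QuotientGroup.mk_out_eq_mul N g
      refine ⟨g, ?_⟩
      rw [hn, map_mul, mul_inv_rev, mul_assoc, inv_mul_cancel_left]
      exact mul_mem (inv_mem (apply_mem_monodromyGroup (ρ.comp N.subtype) n)) hm
    · rintro ⟨q, hq⟩
      exact ⟨_, ⟨q.out, rfl⟩, _, hq, mul_inv_cancel_left _ _⟩
  have hsup : x ∈ ρ.range ⊔ Mₙ := by
    refine monodromyGroup_le (H := ρ.range ⊔ Mₙ) ?_ (fun g => Subgroup.mem_sup_left ⟨g, rfl⟩) hx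
    rw [hcover]
    exact .iUnion fun q => by simpa using (isZarClosed_monodromyGroup _).preimage_mul_mul _ 1
  rw [← SetLike.mem_coe, hcover] at hsup
  simpa using hsup

theorem finiteIndex_monodromyGroup_comp_subtype (ρ : G →* (V ≃ₗ[K] V)) (N : Subgroup G)
    [N.Normal] [N.FiniteIndex] :
    ((monodromyGroup (ρ.comp N.subtype)).subgroupOf (monodromyGroup ρ)).FiniteIndex := by
  choose f hf using fun x : monodromyGroup ρ =>
    exists_inv_mul_mem_monodromyGroup_comp_subtype ρ N x.2
  refine Subgroup.finiteIndex_of_eq_imp_inv_mul_mem f fun a b hab => ?_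
  have := mul_mem (inv_mem (hf a)) (hf b)
  rw [hab] at this
  simpa [Subgroup.mem_subgroupOf, mul_assoc] using this

theorem identityComponent_monodromyGroup_le [FiniteDimensional K V] (ρ : G →* (V ≃ₗ[K] V))
    (G' : Subgroup G) [G'.FiniteIndex] :
    identityComponent (monodromyGroup ρ) ≤ monodromyGroup (ρ.comp G'.subtype) := by
  have hN := finiteIndex_monodromyGroup_comp_subtype ρ G'.normalCore
  refine (identityComponent_le (monodromyGroup_le (ρ := ρ.comp G'.normalCore.subtype)
    (isZarClosed_monodromyGroup ρ) fun n => apply_mem_monodromyGroup ρ n)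
    (isZarClosed_monodromyGroup _) hN).trans ?_
  exact monodromyGroup_le (isZarClosed_monodromyGroup _) fun n =>
    apply_mem_monodromyGroup (ρ.comp G'.subtype) ⟨n, G'.normalCore_le n.2⟩

theorem finiteIndex_comap_identityComponent_monodromyGroup [FiniteDimensional K V]
    (ρ : G →* (V ≃ₗ[K] V)) :
    ((identityComponent (monodromyGroup ρ)).comap ρ).FiniteIndex := by
  refine ⟨fun h => (finiteIndex_identityComponent (isZarClosed_monodromyGroup ρ)).index_ne_zero
    (Subgroup.relIndex_eq_zero_of_le_right ?_ ((Subgroup.index_comap _ ρ).symm.trans h))⟩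
  rintro _ ⟨g, rfl⟩
  exact apply_mem_monodromyGroup ρ g

end Monodromy

theorem Submodule.exists_le_minimal [IsArtinian K V] (P : Submodule K V → Prop)
    {q : Submodule K V} (hq : P q) (hq0 : q ≠ ⊥) :
    ∃ p ≤ q, P p ∧ p ≠ ⊥ ∧ ∀ p' ≤ p, P p' → p' ≠ ⊥ → p' = p := by
  obtain ⟨p, ⟨hpq, hp, hp0⟩, hmin⟩ :=
    IsArtinian.set_has_minimal {p | p ≤ q ∧ P p ∧ p ≠ ⊥} ⟨q, le_rfl, hq, hq0⟩
  exact ⟨p, hpq, hp, hp0, fun p' hp'p hp' hp'0 =>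
    by_contra fun hne => hmin p' ⟨hp'p.trans hpq, hp', hp'0⟩ (lt_of_le_of_ne hp'p hne)⟩

section WeightSpace

variable (W : Subgroup (V ≃ₗ[K] V))

def weightSpace (χ : W → K) : Submodule K V :=
  ⨅ w : W, Module.End.eigenspace ((w : V ≃ₗ[K] V) : V →ₗ[K] V) (χ w)

variable {W}

theorem mem_weightSpace_iff {χ : W → K} {v : V} :
    v ∈ weightSpace W χ ↔ ∀ w : W, (w : V ≃ₗ[K] V) v = χ w • v := by
  simp [weightSpace]

theorem iSupIndep_weightSpace (hW : ∀ a ∈ W, ∀ b ∈ W, a * b = b * a) :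
    iSupIndep (weightSpace W) := by
  refine (Module.End.independent_iInf_maxGenEigenspace_of_forall_mapsTo
    (fun w : W => ((w : V ≃ₗ[K] V) : V →ₗ[K] V)) fun a b μ => ?_).mono fun χ =>
    iInf_mono fun w => Module.End.eigenspace_le_maxGenEigenspace
  refine Module.End.mapsTo_maxGenEigenspace_of_comm ?_ μ
  change ((b : V ≃ₗ[K] V) : V →ₗ[K] V) * (a : V ≃ₗ[K] V) = (a : V ≃ₗ[K] V) * (b : V ≃ₗ[K] V)
  rw [← LinearEquiv.coe_toLinearMap_mul, ← LinearEquiv.coe_toLinearMap_mul, hW _ b.2 _ a.2]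

theorem finite_range_weightSpace [FiniteDimensional K V]
    (hW : ∀ a ∈ W, ∀ b ∈ W, a * b = b * a) : (Set.range (weightSpace W)).Finite := by
  refine (((Submodule.finite_ne_bot_of_iSupIndep (iSupIndep_weightSpace hW)).image
    (weightSpace W)).insert ⊥).subset ?_
  rintro _ ⟨χ, rfl⟩
  by_cases hχ : weightSpace W χ = ⊥
  · exact Or.inl hχ
  · exact Or.inr ⟨χ, hχ, rfl⟩

theorem smul_weightSpace {n : V ≃ₗ[K] V} (hn : n ∈ Subgroup.normalizer (W : Set (V ≃ₗ[K] V)))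
    (χ : W → K) :
    n • weightSpace W χ = weightSpace W (χ ∘ (W.normalizerMonoidHom ⟨n, hn⟩).symm) := by
  ext v
  rw [← SetLike.mem_coe, Submodule.coe_pointwise_smul, Set.mem_smul_set_iff_inv_smul_mem,
    SetLike.mem_coe, mem_weightSpace_iff, mem_weightSpace_iff]
  refine (W.normalizerMonoidHom ⟨n, hn⟩).toEquiv.forall_congr fun w => ?_
  rw [← n.injective.eq_iff]
  simp [LinearEquiv.smul_def, mul_assoc]

theorem exists_weightSpace_inf_ne_bot [IsAlgClosed K] [FiniteDimensional K V]
    (hW : ∀ a ∈ W, ∀ b ∈ W, a * b = b * a) {Q : Submodule K V}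
    (hQ : ∀ w ∈ W, ∀ v ∈ Q, w v ∈ Q) (hQ0 : Q ≠ ⊥) : ∃ χ, Q ⊓ weightSpace W χ ≠ ⊥ := by
  obtain ⟨U, hUQ, hU, hU0, hmin⟩ :=
    Submodule.exists_le_minimal (fun U => ∀ w ∈ W, ∀ v ∈ U, w v ∈ U) hQ hQ0
  have hscalar : ∀ w : W, ∃ c : K,
      U ≤ Module.End.eigenspace ((w : V ≃ₗ[K] V) : V →ₗ[K] V) c := by
    intro w
    have : Nontrivial U := Submodule.nontrivial_iff_ne_bot.mpr hU0
    obtain ⟨c, hc⟩ := Module.End.exists_eigenvalue (((w : V ≃ₗ[K] V) : V →ₗ[K] V).restrict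
      fun v hv => hU w w.2 v hv)
    obtain ⟨v, hv⟩ := hc.exists_hasEigenvector
    refine ⟨c, inf_eq_left.mp (hmin _ inf_le_left ?_ fun hbot => hv.2 ?_)⟩
    · rintro w' hw' x ⟨hxU, hx⟩
      refine ⟨hU w' hw' x hxU, Module.End.mem_eigenspace_iff.mpr ?_⟩
      rw [SetLike.mem_coe, Module.End.mem_eigenspace_iff] at hx
      change ((w : V ≃ₗ[K] V) * w') x = _
      rw [hW _ w.2 _ hw']
      change w' (((w : V ≃ₗ[K] V) : V →ₗ[K] V) x) = _
      rw [hx, map_smul]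
    · have hvE : (v : V) ∈ U ⊓ Module.End.eigenspace ((w : V ≃ₗ[K] V) : V →ₗ[K] V) c :=
        ⟨v.2, Module.End.mem_eigenspace_iff.mpr (congrArg Subtype.val hv.apply_eq_smul)⟩
      rw [hbot] at hvE
      exact Subtype.ext ((Submodule.mem_bot K).mp hvE)
  choose χ hχ using hscalar
  exact ⟨χ, fun h => hU0 (eq_bot_iff.mpr ((le_inf hUQ (le_iInf hχ)).trans h.le))⟩

theorem apply_eq_self_of_mem_weightSpace
    (hWc : IsZarClosed (W : Set (V ≃ₗ[K] V))) (hW : identityComponent W = W) {χ : W → K} {r : ℕ}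
    (hr : 0 < r) (hχ : ∀ w, χ w ^ r = 1) (w : W) {v : V} (hv : v ∈ weightSpace W χ) :
    (w : V ≃ₗ[K] V) v = v := by
  classical
  set H := fixingSubgroup (V ≃ₗ[K] V) (weightSpace W χ : Set V) ⊓ W
  have : Finite {x : K // x ^ r = 1} :=
    Set.Finite.to_subtype (s := {x : K | x ^ r = 1})
      ((Polynomial.nthRoots r (1 : K)).toFinset.finite_toSet.subset
      fun x (hx : x ^ r = 1) => by simpa [Polynomial.mem_nthRoots hr] using hx)
  -- `χ` takes finitely many values and separates the cosets of `H` in `W`.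
  have hfin : (H.subgroupOf W).FiniteIndex := by
    refine Subgroup.finiteIndex_of_eq_imp_inv_mul_mem
      (fun w => (⟨χ w, hχ w⟩ : {x : K // x ^ r = 1})) fun a b hab => ?_
    refine Subgroup.mem_subgroupOf.mpr ⟨mem_fixingSubgroup_iff _ |>.mpr fun u hu => ?_, (a⁻¹ * b).2⟩
    have hab : χ a = χ b := congrArg Subtype.val hab
    rw [LinearEquiv.smul_def]
    change (a : V ≃ₗ[K] V)⁻¹ ((b : V ≃ₗ[K] V) u) = u
    rw [mem_weightSpace_iff.mp hu b, ← hab, ← mem_weightSpace_iff.mp hu a]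
    exact (a : V ≃ₗ[K] V).symm_apply_apply u
  have hWH : W ≤ H := hW.ge.trans
    (identityComponent_le inf_le_right ((isZarClosed_fixingSubgroup _).inter hWc) hfin)
  exact (mem_fixingSubgroup_iff _).mp (hWH w.2).1 v hv

theorem le_stabilizer_weightSpace [FiniteDimensional K V] {M : Subgroup (V ≃ₗ[K] V)}
    (hMc : IsZarClosed (M : Set (V ≃ₗ[K] V))) (hM : identityComponent M = M)
    (hMW : M ≤ Subgroup.normalizer (W : Set (V ≃ₗ[K] V))) (hW : ∀ a ∈ W, ∀ b ∈ W, a * b = b * a)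
    (χ : W → K) : M ≤ MulAction.stabilizer (V ≃ₗ[K] V) (weightSpace W χ) := by
  have : Finite (Set.range (weightSpace W)) := (finite_range_weightSpace hW).to_subtype
  refine (hM.ge.trans (identityComponent_le inf_le_right ((isZarClosed_stabilizer _).inter hMc)
    ?_)).trans inf_le_left
  rw [Subgroup.inf_subgroupOf_right]
  -- `M` permutes the finitely many weight spaces.
  refine Subgroup.finiteIndex_of_eq_imp_inv_mul_mem (fun n : M =>
    (⟨(n : V ≃ₗ[K] V) • weightSpace W χ, _, (smul_weightSpace (hMW n.2) χ).symm⟩ :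
      Set.range (weightSpace W))) fun a b hab => ?_
  have hab : (a : V ≃ₗ[K] V) • weightSpace W χ = (b : V ≃ₗ[K] V) • weightSpace W χ :=
    congrArg Subtype.val hab
  rw [Subgroup.mem_subgroupOf, MulAction.mem_stabilizer_iff, Subgroup.coe_mul, Subgroup.coe_inv,
    mul_smul, ← hab, inv_smul_smul]

end WeightSpace

section Admissible

variable {G : Type*} [Group G] {ρ : G →* (V ≃ₗ[K] V)} {G' : Subgroup G}

theorem isInvariantOn_iff_monodromyGroup_le_stabilizer {p : Submodule K V} :
    IsInvariantOn ρ G' p ↔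
      monodromyGroup (ρ.comp G'.subtype) ≤ MulAction.stabilizer (V ≃ₗ[K] V) p := by
  refine ⟨fun hp => monodromyGroup_le (isZarClosed_stabilizer p) fun g =>
    mem_stabilizer_submodule_iff.mpr ⟨hp g g.2, fun v hv => ?_⟩, fun h g hg v hv => ?_⟩
  · simpa using hp g⁻¹ (inv_mem g.2) v hv
  · exact (mem_stabilizer_submodule_iff.mp
      (h (apply_mem_monodromyGroup (ρ.comp G'.subtype) ⟨g, hg⟩))).1 v hv

theorem exists_isSimpleOn_le [FiniteDimensional K V] {q : Submodule K V}
    (hq : IsInvariantOn ρ G' q) (hq0 : q ≠ ⊥) : ∃ p ≤ q, IsSimpleOn ρ G' p := by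
  obtain ⟨p, hpq, hp, hp0, hmin⟩ := Submodule.exists_le_minimal (IsInvariantOn ρ G') hq hq0
  refine ⟨p, hpq, hp, hp0, fun p' hp'p hp' => ?_⟩
  by_cases hp'0 : p' = ⊥
  · exact Or.inl hp'0
  · exact Or.inr (hmin p' hp'p hp' hp'0)

theorem HasFiniteDetOn.exists_monodromyGroup_le_detRootSubgroup [FiniteDimensional K V]
    {p : Submodule K V} (hdet : HasFiniteDetOn ρ G' p) (hp : IsInvariantOn ρ G' p) :
    ∃ m, 0 < m ∧ monodromyGroup (ρ.comp G'.subtype) ≤ detRootSubgroup p m := by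
  obtain ⟨m, hm, hdet⟩ := hdet
  refine ⟨m, hm, monodromyGroup_le (isZarClosed_detRootSubgroup p m) fun g => ⟨?_, ?_⟩⟩
  · exact isInvariantOn_iff_monodromyGroup_le_stabilizer.mp hp
      (apply_mem_monodromyGroup (ρ.comp G'.subtype) g)
  · change compressedDet p (ρ g) ^ m = 1
    rw [compressedDet_eq_det_restrict (hp g g.2)]
    exact hdet g g.2 _

theorem exists_pow_eq_one_of_weightSpace_ne_bot [FiniteDimensional K V]
    (hadm : IsAdmissibleOn ρ G') {W : Subgroup (V ≃ₗ[K] V)}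
    (hWMo : W ≤ monodromyGroup (ρ.comp G'.subtype)) {χ : W → K} (hχ : weightSpace W χ ≠ ⊥)
    (hstab : monodromyGroup (ρ.comp G'.subtype) ≤
      MulAction.stabilizer (V ≃ₗ[K] V) (weightSpace W χ)) :
    ∃ r, 0 < r ∧ ∀ w, χ w ^ r = 1 := by
  obtain ⟨p, hpχ, hp⟩ :=
    exists_isSimpleOn_le (isInvariantOn_iff_monodromyGroup_le_stabilizer.mpr hstab) hχ
  obtain ⟨m, hm, hdet⟩ := (hadm.2 p hp).exists_monodromyGroup_le_detRootSubgroup hp.1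
  have : Nontrivial p := Submodule.nontrivial_iff_ne_bot.mpr hp.2.1
  refine ⟨Module.finrank K p * m, mul_pos Module.finrank_pos hm, fun w => ?_⟩
  have h := (hdet (hWMo w.2)).2
  rwa [compressedDet_eq_pow_of_apply_eq_smul fun v hv => mem_weightSpace_iff.mp (hpχ hv) w,
    ← pow_mul] at h

theorem iSup_weightSpace_eq_top [IsAlgClosed K] [FiniteDimensional K V]
    (hss : IsSemisimpleOn ρ G') {W : Subgroup (V ≃ₗ[K] V)}
    (hWMo : W ≤ monodromyGroup (ρ.comp G'.subtype))
    (hMoW : monodromyGroup (ρ.comp G'.subtype) ≤ Subgroup.normalizer (W : Set (V ≃ₗ[K] V)))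
    (hW : ∀ a ∈ W, ∀ b ∈ W, a * b = b * a) : ⨆ χ, weightSpace W χ = ⊤ := by
  set S := ⨆ χ, weightSpace W χ
  have hS : IsInvariantOn ρ G' S := fun g hg v hv => by
    have hle : ρ g • S ≤ S := by
      rw [Submodule.smul_iSup']
      exact iSup_le fun χ => (smul_weightSpace (hMoW (apply_mem_monodromyGroup
        (ρ.comp G'.subtype) ⟨g, hg⟩)) χ).trans_le (le_iSup _ _)
    exact hle (Submodule.smul_mem_pointwise_smul v (ρ g) S hv)
  obtain ⟨Q, hQ, hSQ⟩ := hss S hS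
  by_contra hS_ne_top
  have hQ0 : Q ≠ ⊥ := fun h => hS_ne_top (by simpa [h] using hSQ.sup_eq_top)
  have hQW : ∀ w ∈ W, ∀ v ∈ Q, w v ∈ Q := fun w hw =>
    (mem_stabilizer_submodule_iff.mp (isInvariantOn_iff_monodromyGroup_le_stabilizer.mp hQ
      (hWMo hw))).1
  obtain ⟨χ, hχ⟩ := exists_weightSpace_inf_ne_bot hW hQW hQ0
  exact hχ (eq_bot_iff.mpr ((inf_le_inf_left Q (le_iSup _ χ)).trans hSQ.symm.inf_eq_bot.le))

theorem eq_bot_of_isAdmissibleOn [IsAlgClosed K] [FiniteDimensional K V]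
    (hadm : IsAdmissibleOn ρ G')
    (hconn : identityComponent (monodromyGroup (ρ.comp G'.subtype)) =
      monodromyGroup (ρ.comp G'.subtype))
    {W : Subgroup (V ≃ₗ[K] V)} (hWMo : W ≤ monodromyGroup (ρ.comp G'.subtype))
    (hWc : IsZarClosed (W : Set (V ≃ₗ[K] V))) (hW : identityComponent W = W)
    (hWn : ∀ g ∈ monodromyGroup (ρ.comp G'.subtype), ∀ w ∈ W, g * w * g⁻¹ ∈ W)
    (hWab : ∀ a ∈ W, ∀ b ∈ W, a * b = b * a) : W = ⊥ := by
  have hMoW : monodromyGroup (ρ.comp G'.subtype) ≤ Subgroup.normalizer (W : Set (V ≃ₗ[K] V)) :=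
    fun g hg => Subgroup.mem_normalizer_iff.mpr fun w =>
      ⟨hWn g hg w, fun h => by simpa [mul_assoc] using hWn g⁻¹ (inv_mem hg) _ h⟩
  have hfix : ∀ χ, ∀ w : W, ∀ v ∈ weightSpace W χ, (w : V ≃ₗ[K] V) v = v := by
    intro χ w v hv
    by_cases hχ : weightSpace W χ = ⊥
    · rw [hχ, Submodule.mem_bot] at hv
      rw [hv, map_zero]
    obtain ⟨r, hr, hχr⟩ := exists_pow_eq_one_of_weightSpace_ne_bot hadm hWMo hχ
      (le_stabilizer_weightSpace (isZarClosed_monodromyGroup _) hconn hMoW hWab χ)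
    exact apply_eq_self_of_mem_weightSpace hWc hW hr hχr w hv
  refine (Subgroup.eq_bot_iff_forall W).mpr fun w hw => LinearEquiv.ext fun v => ?_
  have hle : ⨆ χ, weightSpace W χ ≤ Module.End.eigenspace (w : V →ₗ[K] V) 1 :=
    iSup_le fun χ v hv => by simp [hfix χ ⟨w, hw⟩ v hv]
  rw [iSup_weightSpace_eq_top hadm.1 hWMo hMoW hWab] at hle
  simpa [Module.End.mem_eigenspace_iff] using hle (Submodule.mem_top (x := v))

end Admissible

end GLZariski

theorem semisimple_monodromy_of_admissible_general
    {K : Type*} [Field K] [IsAlgClosed K]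
    {V : Type*} [AddCommGroup V] [Module K V] [FiniteDimensional K V]
    {G : Type*} [Group G] (ρ : G →* (V ≃ₗ[K] V))
    (hadm : ∀ G' : Subgroup G, G'.FiniteIndex → IsAdmissibleOn ρ G') :
    IsSemisimpleAlgGroup (identityComponent (monodromyGroup ρ)) := by
  have hconn := isConnectedAlgGroup_identityComponent (isZarClosed_monodromyGroup ρ)
  refine ⟨hconn, fun W hWMo hWc hW hWn hWab => ?_⟩
  set G' := (identityComponent (monodromyGroup ρ)).comap ρ
  have hG' : G'.FiniteIndex := finiteIndex_comap_identityComponent_monodromyGroup ρ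
  have hMo : identityComponent (monodromyGroup ρ) = monodromyGroup (ρ.comp G'.subtype) :=
    le_antisymm (identityComponent_monodromyGroup_le ρ G')
      (monodromyGroup_le hconn.1 fun g => g.2)
  rw [hMo] at hconn hWMo hWn
  exact eq_bot_of_isAdmissibleOn (hadm G' hG') hconn.2 hWMo hWc hW hWn hWab

/-- If for every finite-index subgroup `G' ⊆ G` the restriction `ρ|_{G'}` is semisimple
with all simple constituents of finite-order determinant, then the identity component of
the Zariski closure of `ρ(G)` in `GL(V)` is a semisimple algebraic group. -/
theorem semisimple_monodromy_of_admissible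
    {K : Type*} [Field K] [CharZero K] [IsAlgClosed K]
    {V : Type*} [AddCommGroup V] [Module K V] [FiniteDimensional K V]
    {G : Type*} [Group G] (ρ : G →* (V ≃ₗ[K] V))
    (hadm : ∀ G' : Subgroup G, G'.FiniteIndex → IsAdmissibleOn ρ G') :
    IsSemisimpleAlgGroup (identityComponent (monodromyGroup ρ)) :=
  semisimple_monodromy_of_admissible_general ρ hadm
end

section
/- Let H ⊆ G be a normal subgroup, K an algebraically closed field of characteristic 0, and ρ, ρ': G → GL(V) two representations such that ρ|_H = ρ'|_H is absolutely simple, and both det∘ρ and det∘ρ' have finite order. Then there exists a finite-index subgroup G' ⊆ G containing H with ρ|_{G'} = ρ'|_{G'}. -/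
/-!
Since `H` is normal and `ρ = ρ'` on `H`, each `τ g = ρ' g * (ρ g)⁻¹` commutes with `ρ H`, so by
Schur's lemma it is a scalar `μ`. Taking determinants, `μ ^ dim V` is a quotient of elements of
finite order, so `μ` is an `N`-th root of unity for a fixed `N`. Scalars being central, `τ` is a
homomorphism with finite image, and its kernel, the locus where `ρ = ρ'`, has finite index.
-/

open Module

namespace MonoidHom

variable {G M : Type*} [Group G] [Group M]

theorem commute_mul_inv_of_eqOn_normal {H : Subgroup G} (hH : H.Normal) {ρ ρ' : G →* M}
    (hagree : ∀ h ∈ H, ρ h = ρ' h) (g : G) {h : G} (hh : h ∈ H) :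
    Commute (ρ' g * (ρ g)⁻¹) (ρ h) := by
  have hconj : ρ (g⁻¹ * h * g) = ρ' (g⁻¹ * h * g) :=
    hagree _ (by simpa using hH.conj_mem h hh g⁻¹)
  simp only [map_mul, map_inv, hagree h hh] at hconj
  rw [hagree h hh]
  calc ρ' g * (ρ g)⁻¹ * ρ' h = ρ' g * ((ρ g)⁻¹ * ρ' h * ρ g) * (ρ g)⁻¹ := by group
    _ = ρ' h * (ρ' g * (ρ g)⁻¹) := by rw [hconj]; group

def mulInvOfCentral (ρ ρ' : G →* M) (hc : ∀ g, ρ' g * (ρ g)⁻¹ ∈ Subgroup.center M) : G →* M where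
  toFun g := ρ' g * (ρ g)⁻¹
  map_one' := by simp
  map_mul' a b := by
    have hb := Subgroup.mem_center_iff.mp (hc b)
    calc ρ' (a * b) * (ρ (a * b))⁻¹
        = ρ' a * (ρ' b * (ρ b)⁻¹) * (ρ a)⁻¹ := by simp only [map_mul, mul_inv_rev, mul_assoc]
      _ = (ρ' b * (ρ b)⁻¹) * (ρ' a * (ρ a)⁻¹) := by rw [hb (ρ' a)]; group
      _ = (ρ' a * (ρ a)⁻¹) * (ρ' b * (ρ b)⁻¹) := (hb _).symm

theorem ker_mulInvOfCentral (ρ ρ' : G →* M) (hc : ∀ g, ρ' g * (ρ g)⁻¹ ∈ Subgroup.center M) :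
    (mulInvOfCentral ρ ρ' hc).ker = eqLocus ρ ρ' := by
  ext g
  exact mul_inv_eq_one.trans eq_comm

theorem finiteIndex_eqLocus_of_mulInv_mem {ρ ρ' : G →* M} {S : Set M} (hS : S.Finite)
    (hSc : S ⊆ Subgroup.center M) (hρ : ∀ g, ρ' g * (ρ g)⁻¹ ∈ S) :
    (eqLocus ρ ρ').FiniteIndex := by
  have hc g := hSc (hρ g)
  have : Finite (mulInvOfCentral ρ ρ' hc).range :=
    (hS.subset (by rintro _ ⟨g, rfl⟩; exact hρ g)).to_subtype
  rw [← ker_mulInvOfCentral ρ ρ' hc]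
  infer_instance

end MonoidHom

namespace Module.End

variable {K V : Type*} [Field K] [AddCommGroup V] [Module K V]

theorem exists_eq_algebraMap_of_forall_commute [IsAlgClosed K] [FiniteDimensional K V]
    [Nontrivial V] {ι : Type*} (T : ι → End K V)
    (hT : ∀ p : Submodule K V, (∀ i, ∀ v ∈ p, T i v ∈ p) → p = ⊥ ∨ p = ⊤)
    {f : End K V} (hf : ∀ i, Commute f (T i)) : ∃ μ : K, f = algebraMap K (End K V) μ := by
  obtain ⟨μ, hμ⟩ := f.exists_eigenvalue
  have hinv (i : ι) (v : V) (hv : v ∈ f.eigenspace μ) : T i v ∈ f.eigenspace μ := by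
    rw [mem_eigenspace_iff] at hv ⊢
    rw [← mul_apply, (hf i).eq, mul_apply, hv, map_smul]
  have htop : f.eigenspace μ = ⊤ := (hT _ hinv).resolve_left (hasEigenvalue_iff.mp hμ)
  refine ⟨μ, LinearMap.ext fun v => ?_⟩
  rw [algebraMap_end_apply, ← mem_eigenspace_iff, htop]
  trivial

end Module.End

namespace LinearEquiv

section CommRing

variable (R M : Type*) [CommRing R] [AddCommGroup M] [Module R M]

def rootOfUnityScalars (N : ℕ) : Set (M ≃ₗ[R] M) :=
  {e | ∃ μ : R, μ ^ N = 1 ∧ (e : End R M) = algebraMap R (End R M) μ}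

theorem rootOfUnityScalars_subset_center (N : ℕ) :
    rootOfUnityScalars R M N ⊆ Subgroup.center (M ≃ₗ[R] M) := by
  rintro e ⟨μ, -, he⟩
  refine Subgroup.mem_center_iff.mpr fun f => LinearEquiv.ext fun v => ?_
  have he' (w : M) : e w = μ • w := by rw [← coe_coe, he, algebraMap_end_apply]
  simp only [LinearEquiv.mul_apply, he', map_smul]

theorem finite_rootOfUnityScalars [IsDomain R] {N : ℕ} (hN : 0 < N) :
    (rootOfUnityScalars R M N).Finite := by
  have hroots : (algebraMap R (End R M) '' {μ : R | μ ^ N = 1}).Finite :=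
    ((Polynomial.nthRootsFinset N (1 : R)).finite_toSet.subset fun μ hμ =>
      (Polynomial.mem_nthRootsFinset hN 1).mpr hμ).image _
  refine (hroots.preimage toLinearMap_injective.injOn).subset ?_
  rintro e ⟨μ, hμ, he⟩
  exact ⟨μ, hμ, he.symm⟩

variable {R M}

theorem det_mul_inv_pow_eq_one {e₁ e₂ : M ≃ₗ[R] M} {m₁ m₂ : ℕ}
    (h₁ : LinearMap.det (e₁ : M →ₗ[R] M) ^ m₁ = 1) (h₂ : LinearMap.det (e₂ : M →ₗ[R] M) ^ m₂ = 1) :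
    LinearMap.det ((e₂ * e₁⁻¹ : M ≃ₗ[R] M) : M →ₗ[R] M) ^ (m₁ * m₂) = 1 := by
  have h₁' : LinearEquiv.det e₁ ^ m₁ = 1 := Units.ext (by simpa [coe_det] using h₁)
  have h₂' : LinearEquiv.det e₂ ^ m₂ = 1 := Units.ext (by simpa [coe_det] using h₂)
  rw [← coe_det, ← Units.val_pow_eq_pow_val, map_mul, map_inv, mul_pow, inv_pow,
    pow_mul (LinearEquiv.det e₁), h₁', pow_mul' (LinearEquiv.det e₂), h₂', one_pow, one_pow,
    inv_one, mul_one, Units.val_one]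

end CommRing

variable {K V : Type*} [Field K] [IsAlgClosed K] [AddCommGroup V] [Module K V]
  [FiniteDimensional K V] [Nontrivial V]

theorem mem_rootOfUnityScalars_of_forall_commute {ι : Type*} (T : ι → V ≃ₗ[K] V)
    (hT : ∀ p : Submodule K V, (∀ i, ∀ v ∈ p, T i v ∈ p) → p = ⊥ ∨ p = ⊤)
    {e : V ≃ₗ[K] V} (he : ∀ i, Commute e (T i)) {N : ℕ}
    (hdet : LinearMap.det (e : V →ₗ[K] V) ^ N = 1) :
    e ∈ rootOfUnityScalars K V (finrank K V * N) := by
  obtain ⟨μ, hμ : (e : End K V) = _⟩ :=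
    End.exists_eq_algebraMap_of_forall_commute (fun i => (T i : End K V)) hT
      fun i => (he i).map automorphismGroup.toLinearMapMonoidHom
  refine ⟨μ, ?_, hμ⟩
  rwa [hμ, Algebra.algebraMap_eq_smul_one, LinearMap.det_smul, map_one, mul_one, ← pow_mul]
    at hdet

end LinearEquiv

theorem eq_on_finiteIndex_of_eq_on_normal_simple_general
    {K : Type*} [Field K] [IsAlgClosed K]
    {V : Type*} [AddCommGroup V] [Module K V] [FiniteDimensional K V]
    {G : Type*} [Group G] (H : Subgroup G) (hH : H.Normal)
    (ρ ρ' : G →* (V ≃ₗ[K] V))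
    (hagree : ∀ h ∈ H, ρ h = ρ' h)
    (hsimple : Nontrivial V ∧ ∀ p : Submodule K V,
      (∀ h ∈ H, ∀ v ∈ p, ρ h v ∈ p) → p = ⊥ ∨ p = ⊤)
    (hdet : ∃ m : ℕ, 0 < m ∧ ∀ g : G,
      (LinearMap.det (ρ g : V →ₗ[K] V)) ^ m = 1)
    (hdet' : ∃ m : ℕ, 0 < m ∧ ∀ g : G,
      (LinearMap.det (ρ' g : V →ₗ[K] V)) ^ m = 1) :
    ∃ G' : Subgroup G, G'.FiniteIndex ∧ H ≤ G' ∧ ∀ g ∈ G', ρ g = ρ' g := by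
  obtain ⟨_, hirr⟩ := hsimple
  obtain ⟨m, hm, hdm⟩ := hdet
  obtain ⟨m', hm', hdm'⟩ := hdet'
  have hτ (g : G) :
      ρ' g * (ρ g)⁻¹ ∈ LinearEquiv.rootOfUnityScalars K V (finrank K V * (m * m')) :=
    LinearEquiv.mem_rootOfUnityScalars_of_forall_commute (fun h : H => ρ h)
      (fun p hp => hirr p fun h hh => hp ⟨h, hh⟩)
      (fun h => MonoidHom.commute_mul_inv_of_eqOn_normal hH hagree g h.2)
      (LinearEquiv.det_mul_inv_pow_eq_one (hdm g) (hdm' g))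
  refine ⟨MonoidHom.eqLocus ρ ρ', ?_, hagree, fun g hg => hg⟩
  exact MonoidHom.finiteIndex_eqLocus_of_mulInv_mem
    (LinearEquiv.finite_rootOfUnityScalars K V (Nat.mul_pos finrank_pos (Nat.mul_pos hm hm')))
    (LinearEquiv.rootOfUnityScalars_subset_center K V _) hτ

/-- Two representations of `G` with finite-order determinant which agree on a normal
subgroup `H`, on which they are (absolutely) simple, agree on a finite-index subgroup of
`G` containing `H`. -/
theorem eq_on_finiteIndex_of_eq_on_normal_simple
    {K : Type*} [Field K] [CharZero K] [IsAlgClosed K]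
    {V : Type*} [AddCommGroup V] [Module K V] [FiniteDimensional K V]
    {G : Type*} [Group G] (H : Subgroup G) (hH : H.Normal)
    (ρ ρ' : G →* (V ≃ₗ[K] V))
    (hagree : ∀ h ∈ H, ρ h = ρ' h)
    (hsimple : Nontrivial V ∧ ∀ p : Submodule K V,
      (∀ h ∈ H, ∀ v ∈ p, ρ h v ∈ p) → p = ⊥ ∨ p = ⊤)
    (hdet : ∃ m : ℕ, 0 < m ∧ ∀ g : G,
      (LinearMap.det (ρ g : V →ₗ[K] V)) ^ m = 1)
    (hdet' : ∃ m : ℕ, 0 < m ∧ ∀ g : G,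
      (LinearMap.det (ρ' g : V →ₗ[K] V)) ^ m = 1) :
    ∃ G' : Subgroup G, G'.FiniteIndex ∧ H ≤ G' ∧ ∀ g ∈ G', ρ g = ρ' g :=
  eq_on_finiteIndex_of_eq_on_normal_simple_general H hH ρ ρ' hagree hsimple hdet hdet'
end

section
/- Let G be a profinite group, H ⊆ G a closed normal subgroup, E a finite extension of ℚ_ℓ, and ρ, ρ': G → GL_r(E) continuous representations with ρ|_H = ρ'|_H absolutely simple, inducing the same projective representation G → PGL_r(E), and both with finite-order determinant. Then there exists an open subgroup G' ⊆ G containing H with ρ|_{G'} = ρ'|_{G'}. -/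
/-!
Writing `ρ' g = c • ρ g`, the ratio `ρ' g * (ρ g)⁻¹` is the scalar matrix `c • 1`, and
`c ^ r = det (ρ' g) / det (ρ g)` has finite order, so the ratio takes only finitely many values.
The left cosets of the equalizer of `ρ` and `ρ'` correspond to these values, so the equalizer is
a closed subgroup of finite index, hence open; it contains `H` because `ρ = ρ'` there.
-/

namespace MonoidHom

variable {G M : Type*} [Group G] [Group M]

theorem mul_inv_eq_mul_inv_iff_inv_mul_mem_eqLocus (f₁ f₂ : G →* M) {a b : G} :
    f₁ a * (f₂ a)⁻¹ = f₁ b * (f₂ b)⁻¹ ↔ a⁻¹ * b ∈ f₁.eqLocus f₂ := by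
  have hcross : ∀ x y z w : M, x * y⁻¹ = z * w⁻¹ ↔ x⁻¹ * z = y⁻¹ * w := fun x y z w => by
    rw [mul_inv_eq_iff_eq_mul, inv_mul_eq_iff_eq_mul]
    constructor <;> rintro rfl <;> group
  rw [hcross, ← map_inv, ← map_inv, ← map_mul, ← map_mul]
  rfl

theorem finiteIndex_eqLocus (f₁ f₂ : G →* M)
    (h : (Set.range fun g => f₁ g * (f₂ g)⁻¹).Finite) : (f₁.eqLocus f₂).FiniteIndex := by
  have hrel : QuotientGroup.leftRel (f₁.eqLocus f₂) = Setoid.ker fun g => f₁ g * (f₂ g)⁻¹ :=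
    Setoid.ext fun a b => by
      rw [QuotientGroup.leftRel_apply, Setoid.ker_def, mul_inv_eq_mul_inv_iff_inv_mul_mem_eqLocus]
  have : Finite (Set.range fun g => f₁ g * (f₂ g)⁻¹) := h.to_subtype
  have : Finite (G ⧸ f₁.eqLocus f₂) := by
    change Finite (Quotient _)
    rw [hrel]
    exact .of_equiv _ (Setoid.quotientKerEquivRange _).symm
  exact Subgroup.finiteIndex_of_finite_quotient

theorem isOpen_eqLocus [TopologicalSpace G] [SeparatelyContinuousMul G] [TopologicalSpace M]
    [T2Space M] {f₁ f₂ : G →* M} (hf₁ : Continuous f₁) (hf₂ : Continuous f₂)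
    (h : (Set.range fun g => f₁ g * (f₂ g)⁻¹).Finite) : IsOpen (f₁.eqLocus f₂ : Set G) :=
  have := finiteIndex_eqLocus f₁ f₂ h
  Subgroup.isOpen_of_isClosed_of_finiteIndex _ (isClosed_eq hf₁ hf₂)

end MonoidHom

namespace Matrix.GeneralLinearGroup

variable {n R : Type*} [Fintype n] [DecidableEq n] [CommRing R]

theorem det_pow_eq_one_iff {A : GL n R} {k : ℕ} :
    det A ^ k = 1 ↔ (A : Matrix n n R).det ^ k = 1 := by
  rw [Units.ext_iff, Units.val_pow_eq_pow_val, val_det_apply, Units.val_one]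

theorem finite_setOf_smul_one_det_pow_eq_one [IsDomain R] {k : ℕ} (hk : 0 < k) :
    {A : GL n R | (∃ c : R, (A : Matrix n n R) = c • 1) ∧ det A ^ k = 1}.Finite := by
  cases isEmpty_or_nonempty n
  · exact Set.subsingleton_of_subsingleton.finite
  classical
  refine ((Polynomial.nthRootsFinset (Fintype.card n * k) (1 : R)).finite_toSet.image
    fun c => c • (1 : Matrix n n R)).preimage Units.val_injective.injOn |>.subset ?_
  rintro A ⟨⟨c, hc⟩, hdet⟩
  refine ⟨c, ?_, hc.symm⟩
  rw [det_pow_eq_one_iff, hc, det_smul, det_one, mul_one, ← pow_mul] at hdet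
  simpa [Polynomial.mem_nthRootsFinset (Nat.mul_pos Fintype.card_pos hk)] using hdet

theorem finite_range_mul_inv_of_eq_smul [IsDomain R] {G : Type*} [Group G]
    {ρ ρ' : G →* GL n R} {m m' : ℕ} (hm : 0 < m) (hm' : 0 < m')
    (hdet : ∀ g, (ρ g : Matrix n n R).det ^ m = 1)
    (hdet' : ∀ g, (ρ' g : Matrix n n R).det ^ m' = 1)
    (hproj : ∀ g, ∃ c : R, (ρ' g : Matrix n n R) = c • (ρ g : Matrix n n R)) :
    (Set.range fun g => ρ' g * (ρ g)⁻¹).Finite := by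
  refine (finite_setOf_smul_one_det_pow_eq_one (Nat.mul_pos hm' hm)).subset ?_
  rintro _ ⟨g, rfl⟩
  obtain ⟨c, hc⟩ := hproj g
  refine ⟨⟨c, by rw [Units.val_mul, hc, Matrix.smul_mul, Units.mul_inv]⟩, ?_⟩
  rw [map_mul, map_inv, mul_pow, inv_pow, pow_mul, pow_mul', det_pow_eq_one_iff.2 (hdet' g),
    det_pow_eq_one_iff.2 (hdet g), one_pow, one_pow, inv_one, mul_one]

end Matrix.GeneralLinearGroup

theorem continuous_reps_eq_on_open_subgroup_general
    {E : Type*} [NormedField E]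
    {G : Type*} [Group G] [TopologicalSpace G] [IsTopologicalGroup G]
    (H : Subgroup G)
    {r : ℕ} (ρ ρ' : G →* GL (Fin r) E)
    (hρc : Continuous ρ) (hρ'c : Continuous ρ')
    (hagree : ∀ h ∈ H, ρ h = ρ' h)
    (hproj : ∀ g : G, ∃ c : E,
      (ρ' g : Matrix (Fin r) (Fin r) E) = c • (ρ g : Matrix (Fin r) (Fin r) E))
    (hdet : ∃ m : ℕ, 0 < m ∧ ∀ g : G, (Matrix.det (ρ g : Matrix (Fin r) (Fin r) E)) ^ m = 1)
    (hdet' : ∃ m : ℕ, 0 < m ∧ ∀ g : G, (Matrix.det (ρ' g : Matrix (Fin r) (Fin r) E)) ^ m = 1) :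
    ∃ G' : Subgroup G, IsOpen (G' : Set G) ∧ H ≤ G' ∧ ∀ g ∈ G', ρ g = ρ' g := by
  obtain ⟨m, hm, hdm⟩ := hdet
  obtain ⟨m', hm', hdm'⟩ := hdet'
  have hratio := Matrix.GeneralLinearGroup.finite_range_mul_inv_of_eq_smul hm hm' hdm hdm' hproj
  exact ⟨ρ'.eqLocus ρ, MonoidHom.isOpen_eqLocus hρ'c hρc hratio,
    fun h hh => (hagree h hh).symm, fun g hg => (hg : ρ' g = ρ g).symm⟩

/-- Two continuous representations of a profinite group `G` over a finite extension `E`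
of `ℚ_ℓ` which agree on a closed normal subgroup `H`, are absolutely simple on `H`
(Burnside: the image of `H` spans the matrix algebra), induce the same projective
representation, and have finite-order determinants, agree on an open subgroup of `G`
containing `H`. -/
theorem continuous_reps_eq_on_open_subgroup
    (ℓ : ℕ) [Fact ℓ.Prime] {E : Type*} [NormedField E] [Algebra ℚ_[ℓ] E]
    [FiniteDimensional ℚ_[ℓ] E]
    {G : Type*} [Group G] [TopologicalSpace G] [IsTopologicalGroup G]
    [CompactSpace G] [T2Space G] [TotallyDisconnectedSpace G]
    (H : Subgroup G) (hH : H.Normal) (hHcl : IsClosed (H : Set G))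
    {r : ℕ} (ρ ρ' : G →* GL (Fin r) E)
    (hρc : Continuous ρ) (hρ'c : Continuous ρ')
    (hagree : ∀ h ∈ H, ρ h = ρ' h)
    (hsimple : Submodule.span E
      {M : Matrix (Fin r) (Fin r) E | ∃ h ∈ H, (ρ h : Matrix (Fin r) (Fin r) E) = M}
        = ⊤)
    (hproj : ∀ g : G, ∃ c : E,
      (ρ' g : Matrix (Fin r) (Fin r) E) = c • (ρ g : Matrix (Fin r) (Fin r) E))
    (hdet : ∃ m : ℕ, 0 < m ∧ ∀ g : G, (Matrix.det (ρ g : Matrix (Fin r) (Fin r) E)) ^ m = 1)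
    (hdet' : ∃ m : ℕ, 0 < m ∧ ∀ g : G, (Matrix.det (ρ' g : Matrix (Fin r) (Fin r) E)) ^ m = 1) :
    ∃ G' : Subgroup G, IsOpen (G' : Set G) ∧ H ≤ G' ∧ ∀ g ∈ G', ρ g = ρ' g :=
  continuous_reps_eq_on_open_subgroup_general H ρ ρ' hρc hρ'c hagree hproj hdet hdet'
end

section
/- Let G be a profinite group, H ⊆ G a closed normal subgroup, E a finite extension of ℚ_ℓ, and ρ_H: H → GL_r(E) a continuous absolutely simple representation such that for every g ∈ G the conjugate h ↦ ρ_H(g h g^{-1}) is isomorphic to ρ_H. Then the assignment g ↦ P_g, where P_g ∈ PGL_r(E) is the unique element with P_g ρ_H(h) P_g^{-1} = ρ_H(g h g^{-1}) for all h ∈ H, is a continuous group homomorphism G → PGL_r(E) extending the projectivization of ρ_H. -/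
/-!
Absolute simplicity says that the matrices `ρ_H(h)` span `gl_r(E)`, so a matrix commuting with all
of them is central (Schur). Hence a matrix conjugating `ρ_H` into its `g`-twist is unique modulo
the centre, and the composition of two such conjugators conjugates into the twist by the product:
choosing one conjugator `W_g` for each `g` gives a homomorphism `G → PGL_r(E)`.

For continuity, `g ↦ W_g M W_g⁻¹` is continuous for every matrix `M`, being a linear combination
of the continuous maps `g ↦ ρ_H(g h g⁻¹)`. Its entries at `M = E_{ij}` are the products
`W_g[k,i] · W_g⁻¹[j,l]`, so near a point where `W_g⁻¹[j,l] ≠ 0` the rescaled representatives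
`W_g⁻¹[j,l] · W_g`, together with their inverses, depend continuously on `g`.
-/

section Span

variable {R A : Type*} [CommSemiring R] [Semiring A] [Algebra R A]

theorem centralizer_range_le_center_of_span_eq_top {ι : Type*} {ρ : ι → Aˣ}
    (hspan : Submodule.span R (Set.range fun i => (ρ i : A)) = ⊤) :
    Subgroup.centralizer (Set.range ρ) ≤ Subgroup.center Aˣ := by
  intro Z hZ
  have hmul : LinearMap.mulRight R (Z : A) = LinearMap.mulLeft R (Z : A) := by
    refine LinearMap.ext_on hspan ?_
    rintro _ ⟨i, rfl⟩
    exact congrArg Units.val (Subgroup.mem_centralizer_iff.1 hZ (ρ i) ⟨i, rfl⟩)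
  exact Subgroup.mem_center_iff.2 fun U => Units.ext (LinearMap.congr_fun hmul U)

theorem continuous_conj_of_span_eq_top [TopologicalSpace A] [ContinuousAdd A]
    [ContinuousConstSMul R A] {X : Type*} [TopologicalSpace X] {S : Set A}
    (hS : Submodule.span R S = ⊤) {W : X → Aˣ}
    (hW : ∀ a ∈ S, Continuous fun x => (W x : A) * a * ↑(W x)⁻¹) (a : A) :
    Continuous fun x => (W x : A) * a * ↑(W x)⁻¹ := by
  have ha : a ∈ Submodule.span R S := hS ▸ Submodule.mem_top
  induction ha using Submodule.span_induction with
  | mem a ha => exact hW a ha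
  | zero => simpa using continuous_const
  | add a b _ _ iha ihb => simp only [mul_add, add_mul]; exact iha.add ihb
  | smul c a _ ih => simp only [mul_smul_comm, smul_mul_assoc]; exact ih.const_smul c

end Span

section Conjugator

variable {G Γ : Type*} [Group G] [Group Γ] {H : Subgroup G} (hH : H.Normal) (ρ : H →* Γ)

def IsConjugator (g : G) (W : Γ) : Prop :=
  ∀ h : H, W * ρ h * W⁻¹ = ρ ⟨g * h * g⁻¹, hH.conj_mem h.1 h.2 g⟩

variable {hH ρ}

theorem isConjugator_one : IsConjugator hH ρ 1 1 := fun h => by simp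

theorem isConjugator_coe (h : H) : IsConjugator hH ρ h (ρ h) := fun h' => by
  rw [← map_inv, ← map_mul, ← map_mul]
  exact congrArg ρ (Subtype.ext (by simp))

theorem IsConjugator.mul {g₁ g₂ : G} {W₁ W₂ : Γ} (h₁ : IsConjugator hH ρ g₁ W₁)
    (h₂ : IsConjugator hH ρ g₂ W₂) : IsConjugator hH ρ (g₁ * g₂) (W₁ * W₂) := fun h => by
  calc W₁ * W₂ * ρ h * (W₁ * W₂)⁻¹ = W₁ * (W₂ * ρ h * W₂⁻¹) * W₁⁻¹ := by group
    _ = ρ ⟨(g₁ * g₂) * h * (g₁ * g₂)⁻¹, _⟩ := by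
      rw [h₂, h₁]
      exact congrArg ρ (Subtype.ext (by group))

theorem IsConjugator.mk_eq_mk_iff (hcent : Subgroup.centralizer (Set.range ρ) ≤ Subgroup.center Γ)
    {g : G} {A : Γ} (hA : IsConjugator hH ρ g A) {B : Γ} :
    (B : Γ ⧸ Subgroup.center Γ) = A ↔ IsConjugator hH ρ g B := by
  rw [QuotientGroup.eq]
  constructor
  · intro hBA h
    have hcomm := Subgroup.mem_center_iff.1 hBA (ρ h)
    calc B * ρ h * B⁻¹ = B * (ρ h * (B⁻¹ * A)) * A⁻¹ := by group
      _ = A * ρ h * A⁻¹ := by rw [hcomm]; group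
      _ = _ := hA h
  · intro hB
    refine hcent (Subgroup.mem_centralizer_iff.2 ?_)
    rintro _ ⟨h, rfl⟩
    calc ρ h * (B⁻¹ * A) = B⁻¹ * (B * ρ h * B⁻¹) * A := by group
      _ = B⁻¹ * (A * ρ h * A⁻¹) * A := by rw [hA h, hB h]
      _ = B⁻¹ * A * ρ h := by group

variable (hH) (hcent : Subgroup.centralizer (Set.range ρ) ≤ Subgroup.center Γ)
  (hconj : ∀ g : G, ∃ W : Γ, IsConjugator hH ρ g W)

noncomputable def projectiveExtension : G →* Γ ⧸ Subgroup.center Γ where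
  toFun g := (hconj g).choose
  map_one' := ((hconj 1).choose_spec.mk_eq_mk_iff hcent).2 isConjugator_one |>.symm
  map_mul' g₁ g₂ := by
    rw [← QuotientGroup.mk_mul]
    exact ((hconj (g₁ * g₂)).choose_spec.mk_eq_mk_iff hcent).2
      ((hconj g₁).choose_spec.mul (hconj g₂).choose_spec) |>.symm

theorem mk_eq_projectiveExtension_iff {g : G} {W : Γ} :
    (W : Γ ⧸ Subgroup.center Γ) = projectiveExtension hH hcent hconj g ↔ IsConjugator hH ρ g W :=
  (hconj g).choose_spec.mk_eq_mk_iff hcent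

end Conjugator

section MatrixEntries

variable {n : Type*} [Fintype n] [DecidableEq n]

theorem Matrix.mul_single_one_mul_apply {l o α : Type*} [Semiring α] {m : Type*} [Fintype m]
    [DecidableEq m] (A : Matrix l m α) (B : Matrix n o α) (i : m) (j : n) (k : l) (k' : o) :
    (A * Matrix.single i j (1 : α) * B) k k' = A k i * B j k' := by
  simp [Matrix.mul_apply, Matrix.single, ite_and]

theorem Matrix.GeneralLinearGroup.exists_apply_ne_zero {R : Type*} [Semiring R] [Nontrivial R]
    [Nonempty n] (A : GL n R) : ∃ i j, (A : Matrix n n R) i j ≠ 0 := by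
  by_contra! h
  exact A.ne_zero (Matrix.ext h)

theorem Matrix.GeneralLinearGroup.mk_units_smul {R : Type*} [CommRing R] (u : Rˣ) (A : GL n R) :
    ((u • A : GL n R) : GL n R ⧸ Subgroup.center (GL n R)) = A := by
  rw [QuotientGroup.eq, Matrix.GeneralLinearGroup.center_eq_range_scalar]
  refine ⟨u⁻¹, Units.ext ?_⟩
  change Matrix.scalar n _ = ((u⁻¹ : Rˣ) • (((A⁻¹ : GL n R)) : Matrix n n R)) * (A : Matrix n n R)
  rw [smul_mul_assoc, ← Units.val_mul, inv_mul_cancel, Units.val_one, Units.smul_def,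
    Matrix.smul_one_eq_diagonal, Matrix.scalar_apply]

end MatrixEntries

section Continuity

variable {X : Type*} [TopologicalSpace X] {n : Type*} [Fintype n] [DecidableEq n]

theorem continuous_apply_mul_inv_apply {R : Type*} [Semiring R] [TopologicalSpace R]
    {W : X → GL n R}
    (hW : ∀ M : Matrix n n R,
      Continuous fun x => (W x : Matrix n n R) * M * (((W x)⁻¹ : GL n R) : Matrix n n R))
    (i j k l : n) :
    Continuous fun x => (W x : Matrix n n R) k i * (((W x)⁻¹ : GL n R) : Matrix n n R) j l := by
  simpa only [Matrix.mul_single_one_mul_apply] using (hW (Matrix.single i j (1 : R))).matrix_elem k l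

variable {K : Type*} [Field K] [TopologicalSpace K] [IsTopologicalDivisionRing K] [T1Space K]
  {W : X → GL n K}
  (hW : ∀ M : Matrix n n K,
    Continuous fun x => (W x : Matrix n n K) * M * (((W x)⁻¹ : GL n K) : Matrix n n K))
include hW

theorem continuousAt_mk_of_continuous_conj (x₀ : X) :
    ContinuousAt (fun x => (W x : GL n K ⧸ Subgroup.center (GL n K))) x₀ := by
  rcases isEmpty_or_nonempty n with hn | hn
  · exact continuousAt_const.congr (Filter.Eventually.of_forall fun x =>
      Subsingleton.elim (1 : GL n K ⧸ Subgroup.center (GL n K)) _)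
  obtain ⟨k, i, hki⟩ := Matrix.GeneralLinearGroup.exists_apply_ne_zero (W x₀)
  obtain ⟨j, l, hjl⟩ := Matrix.GeneralLinearGroup.exists_apply_ne_zero (W x₀)⁻¹
  set c : X → K := fun x => (((W x)⁻¹ : GL n K) : Matrix n n K) j l
  set d : X → K := fun x => (W x : Matrix n n K) k i
  set U : Set X := {x | d x * c x ≠ 0}
  have hdc : Continuous fun x => d x * c x := continuous_apply_mul_inv_apply hW i j k l
  have hU : U ∈ nhds x₀ := (isOpen_compl_singleton.preimage hdc).mem_nhds (mul_ne_zero hki hjl)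
  have hcW : Continuous fun x => c x • (W x : Matrix n n K) := continuous_matrix fun k' i' => by
    simpa only [Matrix.smul_apply, smul_eq_mul, mul_comm] using
      continuous_apply_mul_inv_apply hW i' j k' l
  have hdW : Continuous fun x => d x • (((W x)⁻¹ : GL n K) : Matrix n n K) :=
    continuous_matrix fun j' l' => continuous_apply_mul_inv_apply hW i j' k l'
  let f : U → GL n K := fun x => Units.mk0 (c x) (right_ne_zero_of_mul x.2) • W x
  have hf : Continuous f := by
    refine Units.continuous_iff.2 ⟨hcW.comp continuous_subtype_val, ?_⟩
    have hinv : Continuous fun x : U => (d x * c x)⁻¹ • d x • (((W x)⁻¹ : GL n K) : Matrix n n K) :=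
      ((hdc.comp continuous_subtype_val).inv₀ fun x => x.2).smul (hdW.comp continuous_subtype_val)
    refine hinv.congr fun x => ?_
    change _ = (c x)⁻¹ • (((W x)⁻¹ : GL n K) : Matrix n n K)
    rw [smul_smul, mul_inv_rev, mul_assoc, inv_mul_cancel₀ (left_ne_zero_of_mul x.2), mul_one]
  have hWU : ContinuousOn (fun x => (W x : GL n K ⧸ Subgroup.center (GL n K))) U :=
    continuousOn_iff_continuous_domRestrict.2 ((continuous_quotient_mk'.comp hf).congr
      fun x => Matrix.GeneralLinearGroup.mk_units_smul _ _)
  exact hWU.continuousAt hU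

theorem continuous_mk_of_continuous_conj :
    Continuous fun x => (W x : GL n K ⧸ Subgroup.center (GL n K)) :=
  continuous_iff_continuousAt.2 (continuousAt_mk_of_continuous_conj hW)

end Continuity

theorem exists_continuous_projective_extension_general
    {E : Type*} [NormedField E]
    {G : Type*} [Group G] [TopologicalSpace G] [IsTopologicalGroup G]
    (H : Subgroup G) (hH : H.Normal)
    {r : ℕ} (ρH : H →* GL (Fin r) E) (hρc : Continuous ρH)
    (hsimple : Submodule.span E
      {M : Matrix (Fin r) (Fin r) E | ∃ h : H, (ρH h : Matrix (Fin r) (Fin r) E) = M}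
        = ⊤)
    (hconj : ∀ g : G, ∃ W : GL (Fin r) E, ∀ h : H,
      W * ρH h * W⁻¹ = ρH ⟨g * h * g⁻¹, hH.conj_mem h.1 h.2 g⟩) :
    ∃ P : G →* (GL (Fin r) E ⧸ Subgroup.center (GL (Fin r) E)),
      Continuous P ∧
      (∀ h : H, P (h : G) = QuotientGroup.mk (ρH h)) ∧
      ∀ g : G, ∀ W : GL (Fin r) E, (QuotientGroup.mk W : GL (Fin r) E ⧸ Subgroup.center (GL (Fin r) E)) = P g →
        ∀ h : H, W * ρH h * W⁻¹ = ρH ⟨g * h * g⁻¹, hH.conj_mem h.1 h.2 g⟩ := by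
  have hcent := centralizer_range_le_center_of_span_eq_top hsimple
  refine ⟨projectiveExtension hH hcent hconj, ?_, fun h => ?_,
    fun g W => (mk_eq_projectiveExtension_iff hH hcent hconj).1⟩
  · have hρconj (h : H) : Continuous fun g : G =>
        (ρH ⟨g * h * g⁻¹, hH.conj_mem h.1 h.2 g⟩ : Matrix (Fin r) (Fin r) E) :=
      Units.continuous_val.comp <| hρc.comp <|
        (by fun_prop : Continuous fun g : G => g * h * g⁻¹).subtype_mk _
    refine continuous_mk_of_continuous_conj (continuous_conj_of_span_eq_top hsimple ?_)
    rintro _ ⟨h, rfl⟩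
    refine (hρconj h).congr fun g => ?_
    rw [← Units.val_mul, ← Units.val_mul]
    exact congrArg Units.val ((hconj g).choose_spec h).symm
  · exact ((mk_eq_projectiveExtension_iff hH hcent hconj).2 (isConjugator_coe h)).symm

/-- Clifford theory for profinite groups: if `ρ_H` is a continuous absolutely simple
representation of a closed normal subgroup `H` of a profinite group `G` over a finite
extension `E` of `ℚ_ℓ`, all of whose `G`-conjugates are isomorphic to itself, then the
assignment `g ↦ P_g`, where `P_g ∈ PGL_r(E)` is the unique element conjugating `ρ_H`
into its `g`-conjugate, is a continuous homomorphism `G → PGL_r(E)` extending the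
projectivization of `ρ_H`. -/
theorem exists_continuous_projective_extension
    (ℓ : ℕ) [Fact ℓ.Prime] {E : Type*} [NormedField E] [Algebra ℚ_[ℓ] E]
    [FiniteDimensional ℚ_[ℓ] E]
    {G : Type*} [Group G] [TopologicalSpace G] [IsTopologicalGroup G]
    [CompactSpace G] [T2Space G] [TotallyDisconnectedSpace G]
    (H : Subgroup G) (hH : H.Normal) (hHcl : IsClosed (H : Set G))
    {r : ℕ} (ρH : H →* GL (Fin r) E) (hρc : Continuous ρH)
    (hsimple : Submodule.span E
      {M : Matrix (Fin r) (Fin r) E | ∃ h : H, (ρH h : Matrix (Fin r) (Fin r) E) = M}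
        = ⊤)
    (hconj : ∀ g : G, ∃ W : GL (Fin r) E, ∀ h : H,
      W * ρH h * W⁻¹ = ρH ⟨g * h * g⁻¹, hH.conj_mem h.1 h.2 g⟩) :
    ∃ P : G →* (GL (Fin r) E ⧸ Subgroup.center (GL (Fin r) E)),
      Continuous P ∧
      (∀ h : H, P (h : G) = QuotientGroup.mk (ρH h)) ∧
      ∀ g : G, ∀ W : GL (Fin r) E, (QuotientGroup.mk W : GL (Fin r) E ⧸ Subgroup.center (GL (Fin r) E)) = P g →
        ∀ h : H, W * ρH h * W⁻¹ = ρH ⟨g * h * g⁻¹, hH.conj_mem h.1 h.2 g⟩ :=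
  exists_continuous_projective_extension_general H hH ρH hρc hsimple hconj
end
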